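/- arXiv:1507.02510 — 5 statements merged into one kernel-verified Lean document; each statement's English description precedes it below -/
import Mathlib

section
/- Let d ≥ 3 be an integer, let m ≥ 0, and let c_0, c_1, …, c_m ∈ ℂ be not all zero. Then there is no rational function g ∈ ℂ(z) satisfying g(z^d) = g(z) − Σ_{j=0}^m c_j·z/(1 − z^{d^j}). -/
/-!
Write `g = p / q` in lowest terms. Clearing denominators turns the functional equation into
`P * (p(X^d) q - p q(X^d)) = -q q(X^d) T`, where `T / P = ∑ c_j X / (1 - X^(d^j))`, and one may
assume that `c_M` is the last nonzero coefficient. Off the zeros of `P`, every `d`-th root of a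
root of `q` is again a root; lifting a primitive `d^M`-th root of unity `ζ` through the tower
`exp (2πi a / d^(M+i))` would give infinitely many roots, so `q(ζ) ≠ 0`. At such `ζ` the term
`c_M X / (1 - X^(d^M))` has a simple pole, which forces `q(ζ^d) = 0`, and comparing residues gives
`d^M p(ζ^d) = d c_M q'(ζ^d) ζ^d ζ`: so `ζ` is determined by `ζ^d`. For `M = 0` this contradicts
`q(1) ≠ 0`; for `M ≥ 1` and `d ≥ 3` two distinct primitive `d^M`-th roots of unity have the same
`d`-th power.
-/

open Polynomial

section PartialFractions

variable {R : Type*} [CommRing R]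

noncomputable def sumDenom (R : Type*) [CommRing R] (d m : ℕ) : R[X] :=
  ∏ j ∈ Finset.range m, (1 - X ^ d ^ j)

noncomputable def sumNum (d : ℕ) (c : ℕ → R) : ℕ → R[X]
  | 0 => 0
  | m + 1 => sumNum d c m * (1 - X ^ d ^ m) + C (c m) * X * sumDenom R d m

lemma sumDenom_succ (d m : ℕ) : sumDenom R d (m + 1) = sumDenom R d m * (1 - X ^ d ^ m) :=
  Finset.prod_range_succ _ _

lemma algebraMap_sumNum {K : Type*} [Field K] {d : ℕ} (hd : d ≠ 0) (c : ℕ → K) (m : ℕ) :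
    algebraMap K[X] (RatFunc K) (sumNum d c m) =
      (∑ j ∈ Finset.range m, RatFunc.C (c j) * RatFunc.X / (1 - RatFunc.X ^ d ^ j)) *
        algebraMap K[X] (RatFunc K) (sumDenom K d m) := by
  induction m with
  | zero => simp [sumNum]
  | succ m ih =>
    have hA : (1 - X ^ d ^ m : K[X]) ≠ 0 := fun h0 => by
      simpa [zero_pow (pow_ne_zero m hd)] using congrArg (eval 0) h0
    have hA' := RatFunc.algebraMap_ne_zero hA
    rw [sumNum, sumDenom_succ, Finset.sum_range_succ]
    simp only [map_add, map_mul, map_sub, map_one, map_pow, RatFunc.algebraMap_X,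
      RatFunc.algebraMap_C, ih] at hA' ⊢
    generalize (∑ j ∈ Finset.range m, RatFunc.C (c j) * RatFunc.X / (1 - RatFunc.X ^ d ^ j)) = S
      at *
    field_simp

lemma eval_sumDenom_ne_zero [IsDomain R] {d k m : ℕ} (hd : 1 < d) {ζ : R}
    (hζ : IsPrimitiveRoot ζ (d ^ k)) (hm : m ≤ k) : (sumDenom R d m).eval ζ ≠ 0 := by
  rw [sumDenom, eval_prod, Finset.prod_ne_zero_iff]
  intro j hj h
  rw [eval_sub, eval_one, eval_pow, eval_X, sub_eq_zero] at h
  have := (Nat.pow_dvd_pow_iff_le_right hd).mp (hζ.dvd_of_pow_eq_one _ h.symm)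
  rw [Finset.mem_range] at hj
  omega

end PartialFractions

section ClearDenominators

variable {K : Type*} [Field K]

lemma RatFunc.eval_C_X_pow (d : ℕ) (f : RatFunc K) :
    f.eval RatFunc.C (RatFunc.X ^ d) =
      algebraMap K[X] (RatFunc K) (expand K d f.num) /
        algebraMap K[X] (RatFunc K) (expand K d f.denom) := by
  simp only [RatFunc.eval, coe_expand, hom_eval₂, map_pow, RatFunc.algebraMap_X]
  rfl

lemma mul_expand_sub_eq_of_eval_X_pow {d : ℕ} (hd : d ≠ 0) {g S : RatFunc K} {P T : K[X]}
    (hT : algebraMap K[X] (RatFunc K) T = S * algebraMap K[X] (RatFunc K) P)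
    (hg : g.eval RatFunc.C (RatFunc.X ^ d) = g - S) :
    P * (expand K d g.num * g.denom - g.num * expand K d g.denom) =
      -(g.denom * expand K d g.denom * T) := by
  have hqd : algebraMap K[X] (RatFunc K) (expand K d g.denom) ≠ 0 :=
    RatFunc.algebraMap_ne_zero ((expand_ne_zero (Nat.pos_of_ne_zero hd)).mpr g.denom_ne_zero)
  have hgq : g * algebraMap K[X] (RatFunc K) g.denom = algebraMap K[X] (RatFunc K) g.num := by
    nth_rewrite 1 [← RatFunc.num_div_denom g]
    exact div_mul_cancel₀ _ (RatFunc.algebraMap_ne_zero g.denom_ne_zero)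
  rw [RatFunc.eval_C_X_pow, div_eq_iff hqd] at hg
  apply RatFunc.algebraMap_injective K
  simp only [map_mul, map_sub, map_neg, hT]
  linear_combination (algebraMap K[X] (RatFunc K) P * algebraMap K[X] (RatFunc K) g.denom) * hg +
    (algebraMap K[X] (RatFunc K) P * algebraMap K[X] (RatFunc K) (expand K d g.denom)) * hgq

end ClearDenominators

lemma Polynomial.eval_ne_zero_of_isCoprime {R : Type*} [CommSemiring R] [Nontrivial R]
    {p q : R[X]} (hpq : IsCoprime p q) {z : R} (hz : q.IsRoot z) : p.eval z ≠ 0 := by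
  simpa [hz.eq_zero] using aeval_ne_zero_of_isCoprime hpq z

section FunctionalEquation

variable {R : Type*} [CommRing R] {d : ℕ} {p q P T : R[X]}

lemma isRoot_of_isRoot_pow [IsDomain R] (hpq : IsCoprime p q)
    (h : P * (expand R d p * q - p * expand R d q) = -(q * expand R d q * T)) {β : R}
    (hβ : q.IsRoot (β ^ d)) (hP : P.eval β ≠ 0) : q.IsRoot β := by
  have := congrArg (eval β) h
  simp only [eval_mul, eval_sub, eval_neg, expand_eval, hβ.eq_zero, mul_zero, sub_zero,
    zero_mul, neg_zero, mul_eq_zero] at this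
  exact (this.resolve_left hP).resolve_left (eval_ne_zero_of_isCoprime hpq hβ)

lemma isRoot_pow_of_isRoot [IsDomain R]
    (h : P * (expand R d p * q - p * expand R d q) = -(q * expand R d q * T)) {ζ : R}
    (hP : P.IsRoot ζ) (hq : ¬ q.IsRoot ζ) (hT : T.eval ζ ≠ 0) : q.IsRoot (ζ ^ d) := by
  have := congrArg (eval ζ) h
  simp only [eval_mul, eval_sub, eval_neg, expand_eval, hP.eq_zero, zero_mul, zero_eq_neg,
    mul_eq_zero] at this
  exact (this.resolve_right hT).resolve_left hq

lemma eval_derivative_mul_eq_of_isRoot_pow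
    (h : P * (expand R d p * q - p * expand R d q) = -(q * expand R d q * T)) {ζ : R}
    (hP : P.IsRoot ζ) (hq : q.IsRoot (ζ ^ d)) :
    (derivative P).eval ζ * p.eval (ζ ^ d) * q.eval ζ =
      -(q.eval ζ * ((derivative q).eval (ζ ^ d) * (d * ζ ^ (d - 1))) * T.eval ζ) := by
  have := congrArg (fun f => (derivative f).eval ζ) h
  simp only [derivative_mul, derivative_sub, derivative_neg, derivative_expand, eval_mul,
    eval_add, eval_sub, eval_neg, expand_eval, eval_natCast, eval_pow, eval_X, hP.eq_zero,
    hq.eq_zero] at this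
  linear_combination this

end FunctionalEquation

section SimplePole

variable {R : Type*} [CommRing R] [IsDomain R] {d N : ℕ} {p q Q V : R[X]} {c : R}

/- Residues at `ζ` in `g(X^d) = g - S` for `g = p / q`: the summand `c X / (1 - X ^ N)` of `S`
contributes `-c ζ² / N`, and `g(X^d)` has residue `p(ζ^d) / (d ζ^(d-1) q'(ζ^d))`. -/
lemma isRoot_pow_and_mul_eval_pow_eq (hd : d ≠ 0) (hN : N ≠ 0) (hc : c ≠ 0)
    (h : Q * (1 - X ^ N) * (expand R d p * q - p * expand R d q) =
      -(q * expand R d q * (V * (1 - X ^ N) + C c * X * Q)))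
    {ζ : R} (hζ : ζ ^ N = 1) (hQ : Q.eval ζ ≠ 0) (hqζ : ¬ q.IsRoot ζ) :
    q.IsRoot (ζ ^ d) ∧
      (N : R) * p.eval (ζ ^ d) = d * c * (derivative q).eval (ζ ^ d) * ζ ^ d * ζ := by
  have hζ0 : ζ ≠ 0 := by rintro rfl; simp [zero_pow hN] at hζ
  have hP : (Q * (1 - X ^ N)).IsRoot ζ := by simp [hζ]
  have hT : (V * (1 - X ^ N) + C c * X * Q).eval ζ = c * ζ * Q.eval ζ := by simp [hζ]
  have hroot := isRoot_pow_of_isRoot h hP hqζ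
    (by rw [hT]; exact mul_ne_zero (mul_ne_zero hc hζ0) hQ)
  refine ⟨hroot, ?_⟩
  have hres := eval_derivative_mul_eq_of_isRoot_pow h hP hroot
  have hP' : (derivative (Q * (1 - X ^ N))).eval ζ = -(Q.eval ζ * (N * ζ ^ (N - 1))) := by
    simp [hζ, derivative_X_pow]
  rw [hP', hT] at hres
  have e1 : ζ ^ (N - 1) * ζ = 1 := by
    rw [← pow_succ, Nat.sub_add_cancel (Nat.pos_of_ne_zero hN), hζ]
  have e2 : ζ ^ (d - 1) * ζ = ζ ^ d := by
    rw [← pow_succ, Nat.sub_add_cancel (Nat.pos_of_ne_zero hd)]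
  apply mul_left_cancel₀ (mul_ne_zero (mul_ne_zero hQ hqζ) (pow_ne_zero (N - 1) hζ0))
  linear_combination (-1) * hres
    - (Q.eval ζ * q.eval ζ * ζ ^ d * (derivative q).eval (ζ ^ d) * d * c) * e1
    + (Q.eval ζ * q.eval ζ * (derivative q).eval (ζ ^ d) * d * c) * e2

lemma eq_of_pow_eq_of_pow_eq_one (hpq : IsCoprime p q) (hd : d ≠ 0) (hN : (N : R) ≠ 0)
    (hc : c ≠ 0)
    (h : Q * (1 - X ^ N) * (expand R d p * q - p * expand R d q) =
      -(q * expand R d q * (V * (1 - X ^ N) + C c * X * Q)))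
    {ζ ζ' : R} (hζ : ζ ^ N = 1) (hζ' : ζ' ^ N = 1) (hQ : Q.eval ζ ≠ 0) (hQ' : Q.eval ζ' ≠ 0)
    (hqζ : ¬ q.IsRoot ζ) (hqζ' : ¬ q.IsRoot ζ') (hpow : ζ ^ d = ζ' ^ d) : ζ = ζ' := by
  have hN0 : N ≠ 0 := by rintro rfl; simp at hN
  obtain ⟨hroot, hrel⟩ := isRoot_pow_and_mul_eval_pow_eq hd hN0 hc h hζ hQ hqζ
  obtain ⟨-, hrel'⟩ := isRoot_pow_and_mul_eval_pow_eq hd hN0 hc h hζ' hQ' hqζ'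
  have hne : (N : R) * p.eval (ζ ^ d) ≠ 0 :=
    mul_ne_zero hN (eval_ne_zero_of_isCoprime hpq hroot)
  rw [hrel] at hne
  rw [← hpow] at hrel'
  exact mul_left_cancel₀ (left_ne_zero_of_mul hne) (hrel.symm.trans hrel')

end SimplePole

theorem Polynomial.not_isRoot_of_injective {R : Type*} [CommRing R] [IsDomain R] {q : R[X]}
    (hq : q ≠ 0) {z : ℕ → R} (hz : Function.Injective z)
    (hstep : ∀ i, q.IsRoot (z i) → q.IsRoot (z (i + 1))) : ¬ q.IsRoot (z 0) := by
  intro h0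
  have hroot : ∀ i, q.IsRoot (z i) := fun i => Nat.rec h0 hstep i
  exact Set.infinite_of_injective_forall_mem hz hroot (finite_setOfPred_isRoot hq)

section RootsOfUnity

open Complex

lemma Complex.exp_div_pow_succ_pow (a d k : ℕ) (hd : d ≠ 0) :
    exp (2 * Real.pi * I * (a / d ^ (k + 1))) ^ d = exp (2 * Real.pi * I * (a / d ^ k)) := by
  rw [← exp_nat_mul]
  congr 1
  field_simp
  ring

lemma Complex.isPrimitiveRoot_exp_div_pow {a d : ℕ} (hd : d ≠ 0) (ha : a.Coprime d) (k : ℕ) :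
    IsPrimitiveRoot (exp (2 * Real.pi * I * (a / d ^ k))) (d ^ k) := by
  exact_mod_cast isPrimitiveRoot_exp_of_coprime a (d ^ k) (pow_ne_zero k hd) (ha.pow_right k)

lemma not_isRoot_exp_div_pow {d M a : ℕ} (hd : 1 < d) (ha : a.Coprime d) {p q T : ℂ[X]}
    (hq : q ≠ 0) (hpq : IsCoprime p q)
    (h : sumDenom ℂ d (M + 1) * (expand ℂ d p * q - p * expand ℂ d q) =
      -(q * expand ℂ d q * T)) :
    ¬ q.IsRoot (exp (2 * Real.pi * I * (a / d ^ M))) := by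
  have hprim := isPrimitiveRoot_exp_div_pow (by omega) ha
  refine not_isRoot_of_injective hq (z := fun i => exp (2 * Real.pi * I * (a / d ^ (M + i))))
    (fun i j hij => ?_) (fun i hi => ?_)
  · dsimp only at hij
    have := Nat.pow_right_injective hd ((hprim (M + i)).unique (hij ▸ hprim (M + j)))
    omega
  · refine isRoot_of_isRoot_pow hpq h ?_ (eval_sumDenom_ne_zero hd (hprim _) (by omega))
    rwa [← add_assoc, exp_div_pow_succ_pow _ _ _ (by omega)]

lemma Nat.coprime_one_add_sub_two_mul_pow {d : ℕ} (hd : 2 ≤ d) (n : ℕ) :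
    (1 + (d - 2) * d ^ n).Coprime d := by
  cases n with
  | zero =>
    rw [pow_zero, mul_one, show 1 + (d - 2) = d - 1 by omega,
      Nat.coprime_self_sub_left (by omega)]
    exact Nat.coprime_one_left d
  | succ n =>
    rw [pow_succ, ← mul_assoc, Nat.coprime_add_mul_right_left]
    exact Nat.coprime_one_left d

/- `ξ ^ (1 + (d - 2) * d ^ n) = ξ * ω ^ (d - 2)` with `ω = ξ ^ d ^ n` a primitive `d`-th root of
unity, and `ω ^ (d - 2) ≠ 1` because `d ≥ 3`. -/
lemma IsPrimitiveRoot.pow_one_add_sub_two_mul_pow {M : Type*} [CommMonoid M] {ξ : M} {d n : ℕ}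
    (hd : 3 ≤ d) (hξ : IsPrimitiveRoot ξ (d ^ (n + 1))) :
    (ξ ^ (1 + (d - 2) * d ^ n)) ^ d = ξ ^ d ∧ ξ ^ (1 + (d - 2) * d ^ n) ≠ ξ := by
  constructor
  · rw [← pow_mul, add_mul, one_mul, mul_assoc, ← pow_succ, pow_add, pow_mul', hξ.pow_eq_one,
      one_pow, mul_one]
  · intro h
    have hlt : 1 + (d - 2) * d ^ n < d ^ (n + 1) := by
      rw [pow_succ]
      nlinarith [Nat.sub_add_cancel (show 2 ≤ d by omega), Nat.one_le_pow n d (by omega)]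
    have := hξ.pow_inj hlt (Nat.one_lt_pow (by omega) (by omega)) (h.trans (pow_one ξ).symm)
    have : 0 < (d - 2) * d ^ n := Nat.mul_pos (by omega) (by positivity)
    omega

theorem not_exists_eval_X_pow_eq_sub_sum {d M : ℕ} (hd : 3 ≤ d) {c : ℕ → ℂ} (hc : c M ≠ 0) :
    ¬ ∃ g : RatFunc ℂ, RatFunc.eval RatFunc.C (RatFunc.X ^ d) g =
        g - ∑ j ∈ Finset.range (M + 1),
          RatFunc.C (c j) * RatFunc.X / (1 - RatFunc.X ^ (d ^ j)) := by
  rintro ⟨g, hg⟩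
  have h := mul_expand_sub_eq_of_eval_X_pow (by omega) (algebraMap_sumNum (by omega) c (M + 1)) hg
  have hnot : ∀ a : ℕ, a.Coprime d → ¬ g.denom.IsRoot (exp (2 * Real.pi * I * (a / d ^ M))) :=
    fun a ha => not_isRoot_exp_div_pow (by omega) ha g.denom_ne_zero g.isCoprime_num_denom h
  rw [sumDenom_succ, sumNum] at h
  cases M with
  | zero =>
    have h1 : ¬ g.denom.IsRoot 1 := by simpa using hnot 1 (Nat.coprime_one_left d)
    have hroot := (isRoot_pow_and_mul_eval_pow_eq (by omega) one_ne_zero hc h (one_pow 1)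
      (by simp [sumDenom]) h1).1
    exact h1 (by rwa [one_pow] at hroot)
  | succ n =>
    set b := 1 + (d - 2) * d ^ n
    have hb : b.Coprime d := Nat.coprime_one_add_sub_two_mul_pow (by omega) n
    set ξ := exp (2 * Real.pi * I * ((1 : ℕ) / d ^ (n + 1)))
    have hξ : IsPrimitiveRoot ξ (d ^ (n + 1)) :=
      isPrimitiveRoot_exp_div_pow (by omega) (Nat.coprime_one_left d) (n + 1)
    have hξb : IsPrimitiveRoot (ξ ^ b) (d ^ (n + 1)) := hξ.pow_of_coprime b (hb.pow_right _)
    have hqb : ¬ g.denom.IsRoot (ξ ^ b) := by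
      rw [← exp_nat_mul]
      convert hnot b hb using 3
      push_cast
      ring
    obtain ⟨hpow, hne⟩ := hξ.pow_one_add_sub_two_mul_pow hd
    exact hne (eq_of_pow_eq_of_pow_eq_one g.isCoprime_num_denom (by omega)
      (by exact_mod_cast pow_ne_zero _ (by omega)) hc h hξb.pow_eq_one hξ.pow_eq_one
      (eval_sumDenom_ne_zero (by omega) hξb le_rfl) (eval_sumDenom_ne_zero (by omega) hξ le_rfl)
      hqb (hnot 1 (Nat.coprime_one_left d)) hpow)

end RootsOfUnity

/-- For `d ≥ 3` and complex numbers `c_0, …, c_m` not all zero, no rational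
function `g ∈ ℂ(z)` satisfies `g(z^d) = g(z) − Σ_{j=0}^m c_j·z/(1 − z^(d^j))`.
Here `g(z^d)` is expressed as the evaluation of `g` at `X^d` in `ℂ(X)`
(note that the denominator of `g` never evaluates to `0` at `X^d`, so this
evaluation is the honest substitution). -/
theorem no_ratFunc_solution_Gdj_inhomog
    (d : ℕ) (hd : 3 ≤ d) (m : ℕ) (c : ℕ → ℂ) (hc : ∃ j ≤ m, c j ≠ 0) :
    ¬ ∃ g : RatFunc ℂ,
        RatFunc.eval RatFunc.C (RatFunc.X ^ d) g =
          g - ∑ j ∈ Finset.range (m + 1),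
            RatFunc.C (c j) * RatFunc.X / (1 - RatFunc.X ^ (d ^ j)) := by
  induction m with
  | zero =>
    obtain ⟨j, hj, hcj⟩ := hc
    obtain rfl : j = 0 := by omega
    exact not_exists_eval_X_pow_eq_sub_sum hd hcj
  | succ m ih =>
    by_cases hcm : c (m + 1) = 0
    · obtain ⟨j, hj, hcj⟩ := hc
      have hjm : j ≤ m := by
        by_contra!
        obtain rfl : j = m + 1 := by omega
        exact hcj hcm
      simpa [Finset.sum_range_succ _ (m + 1), hcm] using ih ⟨j, hjm, hcj⟩
    · exact not_exists_eval_X_pow_eq_sub_sum hd hcm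
end

section
/- Let m ≥ 0 and let c_j ∈ ℂ for j ∈ {0, 2, 3, …, m} be not all zero. Then there is no rational function g ∈ ℂ(z) satisfying g(z^2) = g(z) − Σ_{j∈{0,2,…,m}} c_j·z/(1 − z^{2^j}). -/
/-!
Suppose `g(z²) = g(z) - S(z)` with `S(z) = ∑ c_j z / (1 - z^{2^j})`, and let `M` be the largest
index with `c_M ≠ 0`. The function `S` is regular at every primitive `2^k`-th root of unity with
`k > M`, and wherever `S` is regular, a pole of `g` at `x²` forces a pole of `g` at `x`. A pole
of `g` at a primitive `2^k`-th root of unity with `k ≥ M` would therefore propagate to infinitely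
many poles, so there is none.

Now fix a primitive `2^M`-th root of unity `ζ`. Since `ζ` and `-ζ` both square to `ζ²`, the
function `h(z²) = (z - ζ)(z + ζ)(g(z) - S(z))`, where `h = (z - ζ²) g`, takes the same value at
`ζ` and `-ζ`; as `g` is regular at both points, this says that the residues of `S` at `ζ` and
`-ζ` cancel. The residue of `z / (1 - z^n)` at an `n`-th root of unity `a` is `-a² / n`. For
`M ≥ 2` both residues equal `-c_M ζ² / 2^M`, and for `M = 0` the residues at `1` and `-1` are
`-c_0` and `0`; either way `c_M = 0`.
-/

open scoped Polynomial

noncomputable section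

theorem isPrimitiveRoot_two_pow_succ {M : Type*} [CommMonoid M] {x : M} {k : ℕ}
    (hne : x ^ 2 ^ k ≠ 1) (h1 : x ^ 2 ^ (k + 1) = 1) : IsPrimitiveRoot x (2 ^ (k + 1)) :=
  IsPrimitiveRoot.iff_orderOf.2 (orderOf_eq_prime_pow hne h1)

theorem isPrimitiveRoot_neg_one_two_pow_one {R : Type*} [CommRing R] [NeZero (2 : R)] :
    IsPrimitiveRoot (-1 : R) (2 ^ (0 + 1)) :=
  isPrimitiveRoot_two_pow_succ (fun h ↦ two_ne_zero (by linear_combination -h : (2 : R) = 0))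
    (by norm_num)

namespace IsPrimitiveRoot

theorem neg_of_two_le {R : Type*} [CommRing R] {a : R} {k : ℕ} (ha : IsPrimitiveRoot a (2 ^ k))
    (hk : 2 ≤ k) : IsPrimitiveRoot (-a) (2 ^ k) := by
  obtain ⟨k, rfl⟩ := Nat.exists_eq_add_of_le' (by omega : 1 ≤ k)
  have heven : ∀ i, 1 ≤ i → Even (2 ^ i) := fun i hi ↦ (Nat.even_pow' (by omega)).2 even_two
  refine isPrimitiveRoot_two_pow_succ ?_ ?_
  · rw [(heven k (by omega)).neg_pow]
    exact ha.pow_ne_one_of_pos_of_lt (by positivity) (Nat.pow_lt_pow_right one_lt_two (by omega))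
  · rw [(heven (k + 1) (by omega)).neg_pow]
    exact ha.pow_eq_one

theorem exists_sq_eq_two_pow_succ {K : Type*} [Field K] [IsAlgClosed K] [NeZero (2 : K)]
    {a : K} {k : ℕ} (ha : IsPrimitiveRoot a (2 ^ k)) :
    ∃ b, IsPrimitiveRoot b (2 ^ (k + 1)) ∧ b ^ 2 = a := by
  cases k with
  | zero =>
    refine ⟨-1, isPrimitiveRoot_neg_one_two_pow_one, ?_⟩
    simpa using (IsPrimitiveRoot.one_right_iff.1 (by simpa using ha)).symm
  | succ k =>
    obtain ⟨b, hb⟩ := IsAlgClosed.exists_pow_nat_eq a two_pos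
    refine ⟨b, isPrimitiveRoot_two_pow_succ ?_ ?_, hb⟩
    · rw [pow_succ', pow_mul, hb]
      exact ha.pow_ne_one_of_pos_of_lt (by positivity) (Nat.pow_lt_pow_right one_lt_two (by omega))
    · rw [pow_succ', pow_mul, hb, ha.pow_eq_one]

end IsPrimitiveRoot

namespace RatFunc

variable {K : Type*} [Field K]

def RegularAt (f : RatFunc K) (a : K) : Prop := f.denom.eval a ≠ 0

-- `RatFunc.eval` returns `0` at a pole, so a value is only meaningful together with regularity.
def HasValueAt (f : RatFunc K) (a v : K) : Prop :=
  f.RegularAt a ∧ f.eval (RingHom.id K) a = v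

variable {f g S : RatFunc K} {a v w : K}

theorem RegularAt.hasValueAt (hf : f.RegularAt a) :
    f.HasValueAt a (f.eval (RingHom.id K) a) :=
  ⟨hf, rfl⟩

theorem RegularAt.add (hf : f.RegularAt a) (hg : g.RegularAt a) : (f + g).RegularAt a :=
  fun h ↦ mul_ne_zero hf hg <| by
    simpa using Polynomial.eval_eq_zero_of_dvd_of_eval_eq_zero (denom_add_dvd f g) h

theorem RegularAt.mul (hf : f.RegularAt a) (hg : g.RegularAt a) : (f * g).RegularAt a :=
  fun h ↦ mul_ne_zero hf hg <| by
    simpa using Polynomial.eval_eq_zero_of_dvd_of_eval_eq_zero (denom_mul_dvd f g) h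

theorem HasValueAt.add (hf : f.HasValueAt a v) (hg : g.HasValueAt a w) :
    (f + g).HasValueAt a (v + w) :=
  ⟨hf.1.add hg.1, by rw [eval_add _ _ hf.1 hg.1, hf.2, hg.2]⟩

theorem HasValueAt.mul (hf : f.HasValueAt a v) (hg : g.HasValueAt a w) :
    (f * g).HasValueAt a (v * w) :=
  ⟨hf.1.mul hg.1, by rw [eval_mul _ _ hf.1 hg.1, hf.2, hg.2]⟩

theorem hasValueAt_algebraMap (p : K[X]) (a : K) :
    (algebraMap K[X] (RatFunc K) p).HasValueAt a (p.eval a) :=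
  ⟨by simp [RegularAt], by simp⟩

theorem hasValueAt_C (b a : K) : (C b).HasValueAt a b := by
  simpa using hasValueAt_algebraMap (Polynomial.C b) a

theorem hasValueAt_X (a : K) : (X : RatFunc K).HasValueAt a a := by
  simpa using hasValueAt_algebraMap Polynomial.X a

theorem HasValueAt.neg (hf : f.HasValueAt a v) : (-f).HasValueAt a (-v) := by
  simpa using (hasValueAt_C (-1) a).mul hf

theorem HasValueAt.sub (hf : f.HasValueAt a v) (hg : g.HasValueAt a w) :
    (f - g).HasValueAt a (v - w) := by
  simpa [sub_eq_add_neg] using hf.add hg.neg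

theorem hasValueAt_sum {ι : Type*} {s : Finset ι} {F : ι → RatFunc K} {V : ι → K}
    (h : ∀ i ∈ s, (F i).HasValueAt a (V i)) :
    (∑ i ∈ s, F i).HasValueAt a (∑ i ∈ s, V i) := by
  classical
  induction s using Finset.induction_on with
  | empty => simpa using hasValueAt_C 0 a
  | insert i s hi ih =>
    rw [Finset.sum_insert hi, Finset.sum_insert hi]
    exact (h i (Finset.mem_insert_self i s)).add (ih fun j hj ↦ h j (Finset.mem_insert_of_mem hj))

theorem hasValueAt_div {p q : K[X]} (hq : q.eval a ≠ 0) :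
    (algebraMap K[X] (RatFunc K) p / algebraMap K[X] (RatFunc K) q).HasValueAt a
      (p.eval a / q.eval a) := by
  have hreg : RegularAt (algebraMap K[X] (RatFunc K) p / algebraMap K[X] (RatFunc K) q) a :=
    fun h ↦ hq (Polynomial.eval_eq_zero_of_dvd_of_eval_eq_zero (denom_div_dvd p q) h)
  have hq0 : algebraMap K[X] (RatFunc K) q ≠ 0 := algebraMap_ne_zero (by rintro rfl; simp at hq)
  have hmul := hreg.hasValueAt.mul (hasValueAt_algebraMap q a)
  rw [div_mul_cancel₀ _ hq0] at hmul
  exact ⟨hreg, eq_div_of_mul_eq hq ((hasValueAt_algebraMap p a).2.symm.trans hmul.2).symm⟩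

theorem hasValueAt_of_mul_eq {p q : K[X]} (hq : q.eval a ≠ 0)
    (h : f * algebraMap K[X] (RatFunc K) q = algebraMap K[X] (RatFunc K) p) :
    f.HasValueAt a (p.eval a / q.eval a) := by
  have hq0 : algebraMap K[X] (RatFunc K) q ≠ 0 := algebraMap_ne_zero (by rintro rfl; simp at hq)
  rw [(eq_div_iff hq0).2 h]
  exact hasValueAt_div hq

section Expand

variable {n : ℕ}

theorem eval₂_C_X_pow (n : ℕ) (p : K[X]) :
    p.eval₂ C (X ^ n) = algebraMap K[X] (RatFunc K) (Polynomial.expand K n p) := by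
  rw [Polynomial.coe_expand, Polynomial.hom_eval₂, algebraMap_comp_C, map_pow, algebraMap_X]

theorem eval₂_C_X_pow_ne_zero (hn : 0 < n) {p : K[X]} (hp : p ≠ 0) :
    p.eval₂ C (X ^ n) ≠ 0 := by
  rw [eval₂_C_X_pow]
  exact algebraMap_ne_zero ((Polynomial.expand_ne_zero hn).2 hp)

theorem eval_C_X_pow_mul (hn : 0 < n) (f g : RatFunc K) :
    (f * g).eval C (X ^ n) = f.eval C (X ^ n) * g.eval C (X ^ n) :=
  eval_mul _ _ (eval₂_C_X_pow_ne_zero hn (denom_ne_zero f))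
    (eval₂_C_X_pow_ne_zero hn (denom_ne_zero g))

theorem eval_C_X_pow_algebraMap (n : ℕ) (p : K[X]) :
    (algebraMap K[X] (RatFunc K) p).eval C (X ^ n) =
      algebraMap K[X] (RatFunc K) (Polynomial.expand K n p) := by
  simp [eval₂_C_X_pow]

theorem hasValueAt_eval_C_X_pow_of_regularAt (hf : f.RegularAt (a ^ n)) :
    (f.eval C (X ^ n)).HasValueAt a (f.eval (RingHom.id K) (a ^ n)) := by
  simp only [eval, eval₂_C_X_pow]
  convert hasValueAt_div (p := Polynomial.expand K n f.num) _ using 1 <;>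
    simp only [Polynomial.expand_eval]
  · rfl
  · exact hf

theorem hasValueAt_eval_C_X_pow_iff (hn : 0 < n) :
    (f.eval C (X ^ n)).HasValueAt a v ↔ f.HasValueAt (a ^ n) v := by
  refine ⟨fun h ↦ ?_, fun h ↦ h.2 ▸ hasValueAt_eval_C_X_pow_of_regularAt h.1⟩
  suffices hf : f.RegularAt (a ^ n) from
    ⟨hf, (hasValueAt_eval_C_X_pow_of_regularAt hf).2.symm.trans h.2⟩
  intro hden
  obtain ⟨u, w, huw⟩ := isCoprime_num_denom f
  have hnum : f.num.eval (a ^ n) ≠ 0 := fun hnum ↦ by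
    simpa [hnum, hden] using congrArg (Polynomial.eval (a ^ n)) huw
  have hmul : f.eval C (X ^ n) * algebraMap K[X] (RatFunc K) (Polynomial.expand K n f.denom) =
      algebraMap K[X] (RatFunc K) (Polynomial.expand K n f.num) := by
    rw [eval, eval₂_C_X_pow, eval₂_C_X_pow, div_mul_cancel₀]
    exact algebraMap_ne_zero ((Polynomial.expand_ne_zero hn).2 (denom_ne_zero f))
  have := hmul ▸ h.mul (hasValueAt_algebraMap _ a)
  rw [Polynomial.expand_eval, hden, mul_zero] at this
  exact hnum (by simpa using (hasValueAt_algebraMap _ a).2.symm.trans this.2)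

end Expand

theorem eval_C_X_sq_X_sub_C_sq (a : K) :
    (X - C (a ^ 2)).eval C (X ^ 2) = (X - C a) * (X - C (-a)) := by
  have : (X - C (a ^ 2) : RatFunc K) =
      algebraMap K[X] (RatFunc K) (Polynomial.X - Polynomial.C (a ^ 2)) := by simp
  rw [this, eval_C_X_pow_algebraMap]
  simp only [map_sub, Polynomial.expand_X, Polynomial.expand_C, map_pow, algebraMap_X,
    algebraMap_C, map_neg]
  ring

theorem add_eq_zero_of_eval_C_X_sq_eq_sub [NeZero (2 : K)] (hg : g.eval C (X ^ 2) = g - S)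
    (ha : a ≠ 0) (hga : g.RegularAt a) (hv : ((X - C a) * S).HasValueAt a v)
    (hgb : g.RegularAt (-a)) (hw : ((X - C (-a)) * S).HasValueAt (-a) w) :
    v + w = 0 := by
  have hsub : ((X - C (a ^ 2)) * g).eval C (X ^ 2) = (X - C a) * (X - C (-a)) * (g - S) := by
    rw [eval_C_X_pow_mul two_pos, hg, eval_C_X_sq_X_sub_C_sq]
  have h₁ : (((X - C (a ^ 2)) * g).eval C (X ^ 2)).HasValueAt a (-(2 * a * v)) := by
    have := ((hasValueAt_X a).sub (hasValueAt_C (-a) a)).mul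
      ((((hasValueAt_X a).sub (hasValueAt_C a a)).mul hga.hasValueAt).sub hv)
    rw [hsub]
    convert this using 1 <;> ring
  have h₂ : (((X - C (a ^ 2)) * g).eval C (X ^ 2)).HasValueAt (-a) (2 * a * w) := by
    have := ((hasValueAt_X (-a)).sub (hasValueAt_C a (-a))).mul
      ((((hasValueAt_X (-a)).sub (hasValueAt_C (-a) (-a))).mul hgb.hasValueAt).sub hw)
    rw [hsub]
    convert this using 1 <;> ring
  rw [hasValueAt_eval_C_X_pow_iff two_pos] at h₁ h₂
  rw [neg_sq] at h₂
  have : 2 * a * (v + w) = 0 := by linear_combination h₂.2.symm.trans h₁.2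
  exact (mul_eq_zero.1 this).resolve_left (mul_ne_zero two_ne_zero ha)

theorem regularAt_C_mul_X_div_one_sub_X_pow (d : K) {n : ℕ} (ha : a ^ n ≠ 1) :
    (C d * X / (1 - X ^ n)).RegularAt a := by
  have hq : (1 - Polynomial.X ^ n : K[X]).eval a ≠ 0 := by simpa [sub_eq_zero] using ha.symm
  refine (hasValueAt_of_mul_eq (p := Polynomial.C d * Polynomial.X) hq ?_).1
  have : (1 - X ^ n : RatFunc K) ≠ 0 := by
    rw [← map_one (algebraMap K[X] (RatFunc K)), ← algebraMap_X, ← map_pow, ← map_sub]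
    exact algebraMap_ne_zero fun h ↦ by simp [h] at hq
  simp only [map_sub, map_one, map_pow, map_mul, algebraMap_X, algebraMap_C]
  field_simp

theorem hasValueAt_X_sub_C_mul_C_mul_X_div_one_sub_X_pow (d : K) {n : ℕ} (hn : (n : K) ≠ 0)
    (ha : a ^ n = 1) :
    ((X - C a) * (C d * X / (1 - X ^ n))).HasValueAt a (-(d * a ^ 2) / n) := by
  have hn0 : n ≠ 0 := by rintro rfl; simp at hn
  set Q := (1 - Polynomial.X ^ n : K[X]) /ₘ (Polynomial.X - Polynomial.C a)
  have hQ : (Polynomial.X - Polynomial.C a) * Q = 1 - Polynomial.X ^ n :=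
    Polynomial.mul_divByMonic_eq_iff_isRoot.2 (by simp [ha])
  have hQa : Q.eval a = -(n * a ^ (n - 1)) := by
    have := Polynomial.divByMonic_add_X_sub_C_mul_derivative_divByMonic_eq_derivative
      (1 - Polynomial.X ^ n : K[X]) a
    rw [Polynomial.derivative_sub, Polynomial.derivative_one, Polynomial.derivative_X_pow] at this
    simpa using congrArg (Polynomial.eval a) this
  have hpow : a ^ (n - 1) * a = 1 := by
    rw [← pow_succ, Nat.sub_add_cancel (Nat.one_le_iff_ne_zero.2 hn0), ha]
  have hQa0 : Q.eval a ≠ 0 := by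
    rw [hQa]
    exact neg_ne_zero.2 (mul_ne_zero hn (left_ne_zero_of_mul_eq_one hpow))
  have hQ' : (X - C a) * algebraMap K[X] (RatFunc K) Q = (1 - X ^ n : RatFunc K) := by
    simpa using congrArg (algebraMap K[X] (RatFunc K)) hQ
  have hden : (1 - X ^ n : RatFunc K) ≠ 0 := by
    rw [← hQ']
    exact mul_ne_zero (by simpa using algebraMap_ne_zero (Polynomial.X_sub_C_ne_zero a))
      (algebraMap_ne_zero fun h ↦ by simp [h] at hQa0)
  convert hasValueAt_of_mul_eq (p := Polynomial.C d * Polynomial.X) hQa0 ?_ using 1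
  · simp only [Polynomial.eval_mul, Polynomial.eval_C, Polynomial.eval_X]
    rw [div_eq_div_iff hn hQa0, hQa]
    linear_combination n * d * a * hpow
  · simp only [map_mul, algebraMap_X, algebraMap_C]
    field_simp
    linear_combination (C d * X) * hQ'

def dyadicSum (s : Finset ℕ) (c : ℕ → K) : RatFunc K :=
  ∑ j ∈ s, C (c j) * X / (1 - X ^ 2 ^ j)

section Dyadic

variable {s : Finset ℕ} {c : ℕ → K}

theorem regularAt_dyadicSum (h : ∀ j ∈ s, c j ≠ 0 → a ^ 2 ^ j ≠ 1) :
    (dyadicSum s c).RegularAt a := by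
  refine (hasValueAt_sum fun j hj ↦ RegularAt.hasValueAt ?_).1
  by_cases hcj : c j = 0
  · simpa [hcj] using (hasValueAt_C 0 a).1
  · exact regularAt_C_mul_X_div_one_sub_X_pow (c j) (h j hj hcj)

theorem hasValueAt_X_sub_C_mul_dyadicSum [NeZero (2 : K)] {M : ℕ} (hM : M ∈ s)
    (hmax : ∀ j ∈ s, c j ≠ 0 → j ≤ M) (ha : IsPrimitiveRoot a (2 ^ M)) :
    ((X - C a) * dyadicSum s c).HasValueAt a (-(c M * a ^ 2) / 2 ^ M) := by
  rw [dyadicSum, Finset.mul_sum]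
  convert hasValueAt_sum (V := fun j ↦ if j = M then -(c M * a ^ 2) / 2 ^ M else 0)
    fun j hj ↦ ?_
  · rw [Finset.sum_ite_eq' s M, if_pos hM]
  split_ifs with hjM
  · subst hjM
    have h2 : ((2 ^ j : ℕ) : K) ≠ 0 := by
      push_cast
      exact pow_ne_zero _ two_ne_zero
    simpa using hasValueAt_X_sub_C_mul_C_mul_X_div_one_sub_X_pow (c j) h2 ha.pow_eq_one
  by_cases hcj : c j = 0
  · simpa [hcj] using hasValueAt_C 0 a
  have hj : a ^ 2 ^ j ≠ 1 := ha.pow_ne_one_of_pos_of_lt (by positivity)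
    (Nat.pow_lt_pow_right one_lt_two ((hmax j hj hcj).lt_of_ne hjM))
  simpa using ((hasValueAt_X a).sub (hasValueAt_C a a)).mul
    (regularAt_C_mul_X_div_one_sub_X_pow (c j) hj).hasValueAt

end Dyadic

section Descent

variable [IsAlgClosed K] [NeZero (2 : K)]

theorem regularAt_of_isPrimitiveRoot_two_pow (hg : g.eval C (X ^ 2) = g - S) {D : ℕ}
    (hS : ∀ k, D < k → ∀ x : K, IsPrimitiveRoot x (2 ^ k) → S.RegularAt x)
    {k : ℕ} (hk : D ≤ k) {a : K} (ha : IsPrimitiveRoot a (2 ^ k)) : g.RegularAt a := by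
  have step : ∀ x, g.RegularAt x → S.RegularAt x → g.RegularAt (x ^ 2) := fun x hgx hSx ↦
    ((hasValueAt_eval_C_X_pow_iff two_pos).1 (hg ▸ hgx.hasValueAt.sub hSx.hasValueAt)).1
  by_contra hga
  have hpoles : ∀ i, ∃ x, IsPrimitiveRoot x (2 ^ (k + i)) ∧ ¬g.RegularAt x := by
    intro i
    induction i with
    | zero => exact ⟨a, ha, hga⟩
    | succ i ih =>
      obtain ⟨x, hx, hgx⟩ := ih
      obtain ⟨y, hy, rfl⟩ := hx.exists_sq_eq_two_pow_succ
      exact ⟨y, hy, fun hgy ↦ hgx (step y hgy (hS _ (by omega) y hy))⟩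
  choose x hx hgx using hpoles
  have hinj : Function.Injective x := fun i j hij ↦ by
    have := Nat.pow_right_injective le_rfl ((hx i).unique (hij ▸ hx j))
    omega
  exact (Polynomial.finite_setOfPred_isRoot (denom_ne_zero g)).not_infinite
    (Set.infinite_of_injective_forall_mem hinj fun i ↦ not_not.1 (hgx i))

theorem eval_C_X_sq_ne_sub_dyadicSum {s : Finset ℕ} {c : ℕ → K} {M : ℕ} (hM : M ∈ s)
    (hM1 : M ≠ 1) (hcM : c M ≠ 0) (hmax : ∀ j ∈ s, c j ≠ 0 → j ≤ M) (g : RatFunc K) :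
    g.eval C (X ^ 2) ≠ g - dyadicSum s c := by
  intro hg
  have hS : ∀ k, M < k → ∀ x : K, IsPrimitiveRoot x (2 ^ k) → (dyadicSum s c).RegularAt x :=
    fun k hk x hx ↦ regularAt_dyadicSum fun j hj hcj ↦
      hx.pow_ne_one_of_pos_of_lt (by positivity)
        (Nat.pow_lt_pow_right one_lt_two ((hmax j hj hcj).trans_lt hk))
  have : NeZero ((2 : ℕ) : K) := by rwa [Nat.cast_ofNat]
  obtain ⟨ζ, hζ⟩ := HasEnoughRootsOfUnity.exists_primitiveRoot K (2 ^ M)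
  have hζ0 : ζ ≠ 0 := hζ.ne_zero (by positivity)
  have hgζ := regularAt_of_isPrimitiveRoot_two_pow hg hS le_rfl hζ
  have hv := hasValueAt_X_sub_C_mul_dyadicSum hM hmax hζ
  rcases Nat.lt_or_ge M 2 with hM2 | hM2
  · obtain rfl : M = 0 := by omega
    obtain rfl : ζ = 1 := by simpa using hζ
    have hneg : IsPrimitiveRoot (-1 : K) (2 ^ (0 + 1)) := isPrimitiveRoot_neg_one_two_pow_one
    have hw := ((hasValueAt_X (-1)).sub (hasValueAt_C (-1) (-1))).mul
      (hS 1 one_pos _ hneg).hasValueAt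
    refine hcM ?_
    simpa using add_eq_zero_of_eval_C_X_sq_eq_sub hg hζ0 hgζ hv
      (regularAt_of_isPrimitiveRoot_two_pow hg hS (Nat.zero_le _) hneg) hw
  · have hneg := hζ.neg_of_two_le hM2
    have := add_eq_zero_of_eval_C_X_sq_eq_sub hg hζ0 hgζ hv
      (regularAt_of_isPrimitiveRoot_two_pow hg hS le_rfl hneg)
      (hasValueAt_X_sub_C_mul_dyadicSum hM hmax hneg)
    refine hcM ?_
    simpa [hζ0, two_ne_zero] using (by linear_combination -this : 2 * (c M * ζ ^ 2) / 2 ^ M = 0)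

end Descent

end RatFunc

/-- For complex numbers `c_j`, `j ∈ {0, 2, 3, …, m}`, not all zero, no rational
function `g ∈ ℂ(z)` satisfies `g(z²) = g(z) − Σ_{j∈{0,2,…,m}} c_j·z/(1 − z^(2^j))`.
Here `g(z²)` is expressed as the evaluation of `g` at `X²` in `ℂ(X)`
(note that the denominator of `g` never evaluates to `0` at `X²`, so this
evaluation is the honest substitution). -/
theorem no_ratFunc_solution_G2j_inhomog
    (m : ℕ) (c : ℕ → ℂ) (hc : ∃ j ∈ (Finset.range (m + 1)).erase 1, c j ≠ 0) :
    ¬ ∃ g : RatFunc ℂ,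
        RatFunc.eval RatFunc.C (RatFunc.X ^ 2) g =
          g - ∑ j ∈ (Finset.range (m + 1)).erase 1,
            RatFunc.C (c j) * RatFunc.X / (1 - RatFunc.X ^ (2 ^ j)) := by
  rintro ⟨g, hg⟩
  obtain ⟨M, hM, hmax⟩ :=
    (((Finset.range (m + 1)).erase 1).filter (c · ≠ 0)).exists_max_image id
      (Finset.filter_nonempty_iff.2 hc)
  obtain ⟨hMs, hcM⟩ := Finset.mem_filter.1 hM
  exact RatFunc.eval_C_X_sq_ne_sub_dyadicSum hMs (Finset.ne_of_mem_erase hMs) hcM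
    (fun j hj hcj ↦ hmax j (Finset.mem_filter.2 ⟨hj, hcj⟩)) g hg
end
end

section
/- Let d ≥ 3 be an integer and let (n_1, n_2) ∈ ℤ² with (n_1, n_2) ≠ (0, 0). Then there is no nonzero rational function r ∈ ℂ(z) satisfying r(z^d) = (1 − z)^{−n_1}·(1 + z²)^{−n_2}·r(z). -/
/-! Write `ord_a r` for the order of `r` at `a` (`RatFunc.ordAt a r`). As `z ↦ z ^ d` is
unramified away from `0`, taking orders at `a ≠ 0` in the functional equation gives
`ord_{a^d} r = ord_a r - n₁ [a = 1] - n₂ ([a = i] + [a = -i])`.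
At `a = 1` this forces `n₁ = 0`, and then `ord_{b^d} r = ord_b r` for all `b ≠ 0, ±i`.
Starting from `e^{iθ}` with `0 < |θ| ≤ π`, the successive `d`-th roots `e^{iθ/d^k}` are pairwise
distinct and, because `d ≥ 3`, stay within angle `π/3` of `1`, hence avoid `±i`; they all have the
same order, and `r` has only finitely many zeros and poles, so that order is `0`. This gives
order `0` at `i`, `-i`, `-1`, hence at `i^d ∈ {±1, ±i}` (when `i^d = 1`, `d` is even and
`1 = (-1)^d`). The relation at `a = i` now reads `0 = 0 - n₂`. -/

open scoped Polynomial

namespace Polynomial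

section CommRing

variable {R : Type*} [CommRing R]

@[simp]
theorem rootMultiplicity_one (a : R) : (1 : R[X]).rootMultiplicity a = 0 := by
  rw [← C_1, rootMultiplicity_C]

theorem rootMultiplicity_eq_one_of_isRoot {p : R[X]} {a : R} (hroot : p.IsRoot a)
    (hder : ¬ (derivative p).IsRoot a) : p.rootMultiplicity a = 1 := by
  have hp : p ≠ 0 := by rintro rfl; simp at hder
  have hpos := (rootMultiplicity_pos hp).mpr hroot
  have hle := mt (one_lt_rootMultiplicity_iff_isRoot hp).mp fun h => hder h.2
  omega

end CommRing

variable {R : Type*} [CommRing R] [IsDomain R]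

theorem rootMultiplicity_pow (p : R[X]) (a : R) (n : ℕ) :
    (p ^ n).rootMultiplicity a = n * p.rootMultiplicity a := by
  classical
  simp only [← count_roots, roots_pow, Multiset.count_nsmul]

theorem rootMultiplicity_comp {q : R[X]} (hq : 0 < q.natDegree) (p : R[X]) (a : R) :
    (p.comp q).rootMultiplicity a =
      p.rootMultiplicity (q.eval a) * (q - C (q.eval a)).rootMultiplicity a := by
  rcases eq_or_ne p 0 with rfl | hp
  · simp
  set b := q.eval a
  obtain ⟨s, hps, hsb⟩ := p.exists_eq_pow_rootMultiplicity_mul_and_not_dvd hp b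
  have hsa : ¬ (s.comp q).IsRoot a := by
    simpa [IsRoot, eval_comp, dvd_iff_isRoot] using hsb
  have hqb : q - C b ≠ 0 := by
    intro h
    rw [sub_eq_zero.mp h, natDegree_C] at hq
    exact hq.false
  have hcomp : p.comp q = (q - C b) ^ p.rootMultiplicity b * s.comp q := by
    conv_lhs => rw [hps]
    simp only [mul_comp, pow_comp, sub_comp, X_comp, C_comp]
  have hsq : s.comp q ≠ 0 := fun h => hsa (by simp [h])
  rw [hcomp, rootMultiplicity_mul (mul_ne_zero (pow_ne_zero _ hqb) hsq), rootMultiplicity_pow,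
    rootMultiplicity_eq_zero hsa, add_zero]

theorem rootMultiplicity_X_pow_sub_C_pow_self {d : ℕ} (hd : (d : R) ≠ 0) {a : R} (ha : a ≠ 0) :
    ((X : R[X]) ^ d - C (a ^ d)).rootMultiplicity a = 1 :=
  rootMultiplicity_eq_one_of_isRoot (by simp) <| by
    simp only [derivative_sub, derivative_X_pow, derivative_C, sub_zero, IsRoot.def, eval_mul,
      eval_C, eval_pow, eval_X]
    exact mul_ne_zero hd (pow_ne_zero _ ha)

end Polynomial

namespace RatFunc

open Polynomial

variable {K : Type*} [Field K]

noncomputable def ordAt (a : K) (r : RatFunc K) : ℤ :=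
  r.num.rootMultiplicity a - r.denom.rootMultiplicity a

@[simp]
theorem ordAt_zero (a : K) : ordAt a 0 = 0 := by
  simp [ordAt]

theorem ordAt_div_algebraMap {p q : K[X]} (hp : p ≠ 0) (hq : q ≠ 0) (a : K) :
    ordAt a (algebraMap K[X] (RatFunc K) p / algebraMap K[X] (RatFunc K) q) =
      p.rootMultiplicity a - q.rootMultiplicity a := by
  set r := algebraMap K[X] (RatFunc K) p / algebraMap K[X] (RatFunc K) q
  have hr : r ≠ 0 := div_ne_zero (algebraMap_ne_zero hp) (algebraMap_ne_zero hq)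
  have key : (r.num * q).rootMultiplicity a = (p * r.denom).rootMultiplicity a := by
    rw [(num_mul_eq_mul_denom_iff hq).mpr rfl]
  rw [rootMultiplicity_mul (mul_ne_zero (num_ne_zero hr) hq),
    rootMultiplicity_mul (mul_ne_zero hp r.denom_ne_zero)] at key
  unfold ordAt
  omega

theorem ordAt_algebraMap {p : K[X]} (hp : p ≠ 0) (a : K) :
    ordAt a (algebraMap K[X] (RatFunc K) p) = p.rootMultiplicity a := by
  simpa using ordAt_div_algebraMap hp one_ne_zero a

theorem ordAt_C (c : K) (a : K) : ordAt a (C c) = 0 := by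
  simp [ordAt]

theorem ordAt_X_sub_C [DecidableEq K] (a b : K) :
    ordAt a (X - C b) = if a = b then 1 else 0 := by
  rw [← algebraMap_X, ← algebraMap_C, ← map_sub, ordAt_algebraMap (X_sub_C_ne_zero b),
    rootMultiplicity_X_sub_C]
  split_ifs <;> rfl

theorem ordAt_mul {r s : RatFunc K} (hr : r ≠ 0) (hs : s ≠ 0) (a : K) :
    ordAt a (r * s) = ordAt a r + ordAt a s := by
  have hnum := mul_ne_zero (num_ne_zero hr) (num_ne_zero hs)
  have hdenom := mul_ne_zero r.denom_ne_zero s.denom_ne_zero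
  have hrs : r * s = algebraMap K[X] (RatFunc K) (r.num * s.num) /
      algebraMap K[X] (RatFunc K) (r.denom * s.denom) := by
    rw [map_mul, map_mul, ← div_mul_div_comm, num_div_denom, num_div_denom]
  rw [hrs, ordAt_div_algebraMap hnum hdenom, rootMultiplicity_mul hnum,
    rootMultiplicity_mul hdenom, ordAt, ordAt]
  push_cast
  ring

theorem ordAt_inv (r : RatFunc K) (a : K) : ordAt a r⁻¹ = -ordAt a r := by
  rcases eq_or_ne r 0 with rfl | hr
  · simp [ordAt]
  have hinv : r⁻¹ = algebraMap K[X] (RatFunc K) r.denom / algebraMap K[X] (RatFunc K) r.num := by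
    rw [← inv_div, num_div_denom]
  rw [hinv, ordAt_div_algebraMap r.denom_ne_zero (num_ne_zero hr), ordAt, neg_sub]

theorem ordAt_zpow {r : RatFunc K} (hr : r ≠ 0) (n : ℤ) (a : K) :
    ordAt a (r ^ n) = n * ordAt a r := by
  induction n using Int.induction_on with
  | zero => simpa using ordAt_C 1 a
  | succ n ih => rw [zpow_add_one₀ hr, ordAt_mul (zpow_ne_zero n hr) hr, ih]; ring
  | pred n ih =>
    rw [zpow_sub_one₀ hr, ordAt_mul (zpow_ne_zero _ hr) (inv_ne_zero hr), ordAt_inv, ih]; ring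

theorem finite_support_ordAt (r : RatFunc K) : (Function.support fun a => ordAt a r).Finite := by
  classical
  refine ((r.num.roots + r.denom.roots).toFinset.finite_toSet).subset fun a ha => ?_
  rw [Finset.mem_coe, Multiset.mem_toFinset, Multiset.mem_add, ← Multiset.count_ne_zero,
    ← Multiset.count_ne_zero, count_roots, count_roots]
  rw [Function.mem_support, ordAt] at ha
  omega

theorem eval₂_C_algebraMap (p q : K[X]) :
    p.eval₂ C (algebraMap K[X] (RatFunc K) q) = algebraMap K[X] (RatFunc K) (p.comp q) := by
  rw [comp, hom_eval₂, algebraMap_comp_C]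

theorem ordAt_eval_algebraMap {q : K[X]} (hq : 0 < q.natDegree) (r : RatFunc K) (a : K) :
    ordAt a (r.eval C (algebraMap K[X] (RatFunc K) q)) =
      ordAt (q.eval a) r * (q - Polynomial.C (q.eval a)).rootMultiplicity a := by
  rcases eq_or_ne r 0 with rfl | hr
  · simp [ordAt]
  have hcomp {p : K[X]} (hp : p ≠ 0) : p.comp q ≠ 0 := by
    rw [Ne, comp_eq_zero_iff]
    rintro (h | ⟨-, h⟩)
    · exact hp h
    · rw [h, natDegree_C] at hq
      exact hq.false
  rw [eval, eval₂_C_algebraMap, eval₂_C_algebraMap,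
    ordAt_div_algebraMap (hcomp (num_ne_zero hr)) (hcomp r.denom_ne_zero),
    rootMultiplicity_comp hq, rootMultiplicity_comp hq, ordAt]
  push_cast
  ring

theorem ordAt_eval_X_pow {d : ℕ} (hd : (d : K) ≠ 0) (r : RatFunc K) {a : K} (ha : a ≠ 0) :
    ordAt a (r.eval C (X ^ d)) = ordAt (a ^ d) r := by
  have hd0 : 0 < ((Polynomial.X : K[X]) ^ d).natDegree := by
    rw [natDegree_X_pow]
    exact Nat.pos_of_ne_zero fun h => hd (by simp [h])
  rw [← algebraMap_X, ← map_pow, ordAt_eval_algebraMap hd0, eval_pow, Polynomial.eval_X,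
    rootMultiplicity_X_pow_sub_C_pow_self hd ha, Nat.cast_one, mul_one]

theorem X_sub_C_ne_zero (b : K) : (X - C b : RatFunc K) ≠ 0 := by
  rw [← algebraMap_X, ← algebraMap_C, ← map_sub]
  exact algebraMap_ne_zero (Polynomial.X_sub_C_ne_zero b)

theorem ordAt_one_sub_X [DecidableEq K] (a : K) :
    ordAt a (1 - X : RatFunc K) = if a = 1 then 1 else 0 := by
  have h : (1 - X : RatFunc K) = C (-1) * (X - C 1) := by
    rw [map_neg, map_one]
    ring
  rw [h, ordAt_mul (by simp) (X_sub_C_ne_zero 1), ordAt_C, ordAt_X_sub_C, zero_add]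

open Complex in
theorem ordAt_one_add_X_sq (a : ℂ) :
    ordAt a (1 + X ^ 2 : RatFunc ℂ) = (if a = I then 1 else 0) + (if a = -I then 1 else 0) := by
  have h : (1 + X ^ 2 : RatFunc ℂ) = (X - C I) * (X - C (-I)) := by
    have hI : (C I : RatFunc ℂ) ^ 2 = -1 := by rw [← map_pow, I_sq, map_neg, map_one]
    rw [map_neg]
    linear_combination hI
  rw [h, ordAt_mul (X_sub_C_ne_zero I) (X_sub_C_ne_zero (-I)), ordAt_X_sub_C, ordAt_X_sub_C]

end RatFunc

theorem Set.Finite.apply_eq_zero_of_injective {α M : Type*} [Zero M] {f : α → M}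
    (hf : (Function.support f).Finite) {σ : ℕ → α} (hσ : Function.Injective σ)
    (hstep : ∀ k, f (σ (k + 1)) = f (σ k)) : f (σ 0) = 0 := by
  by_contra h
  have hconst : ∀ k, f (σ k) = f (σ 0) := by
    intro k
    induction k with
    | zero => rfl
    | succ k ih => rw [hstep, ih]
  exact hf.not_infinite <| Set.infinite_of_injective_forall_mem hσ fun k => by
    rw [Function.mem_support, hconst k]
    exact h

namespace Complex

open Real

theorem apply_exp_mul_I_eq_zero {M : Type*} [Zero M] {f : ℂ → M}
    (hf : (Function.support f).Finite) {d : ℕ} (hd : 3 ≤ d)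
    (hfix : ∀ b : ℂ, b ≠ 0 → b ≠ I → b ≠ -I → f (b ^ d) = f b)
    {θ : ℝ} (hθ : θ ∈ Set.Ioc (-π) π) (hθ0 : θ ≠ 0) : f (exp (θ * I)) = 0 := by
  set σ : ℕ → ℂ := fun k => exp (↑(θ / d ^ k) * I)
  have hd' : (3 : ℝ) ≤ d := by exact_mod_cast hd
  have hdpos : (0 : ℝ) < d := by linarith
  have hsmall (k : ℕ) : |θ / d ^ (k + 1)| ≤ π / 3 := by
    rw [abs_div, abs_of_pos (pow_pos hdpos _)]
    refine div_le_div₀ pi_pos.le (abs_le.mpr ⟨hθ.1.le, hθ.2⟩) (by norm_num) ?_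
    exact hd'.trans (le_self_pow₀ (by linarith) k.succ_ne_zero)
  have harg (k : ℕ) : (σ k).arg = θ / d ^ k := by
    refine (congrArg arg (exp_mul_I _)).trans (arg_cos_add_sin_mul_I ?_)
    rcases k with _ | k
    · simpa using hθ
    · have := abs_le.mp (hsmall k)
      constructor <;> linarith [pi_pos]
  have hσ : Function.Injective σ := by
    intro j k hjk
    have h := congrArg arg hjk
    rw [harg, harg, div_eq_div_iff (pow_pos hdpos _).ne' (pow_pos hdpos _).ne',
      mul_right_inj' hθ0] at h
    exact pow_right_injective₀ hdpos (by linarith) h.symm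
  have hstep (k : ℕ) : f (σ (k + 1)) = f (σ k) := by
    have hpow : σ (k + 1) ^ d = σ k := by
      simp only [σ, ← exp_nat_mul]
      congr 1
      have hd0 : (d : ℂ) ≠ 0 := Nat.cast_ne_zero.mpr (by omega)
      push_cast
      field_simp
      ring
    have hI : ∀ c : ℂ, |c.arg| = π / 2 → σ (k + 1) ≠ c := by
      rintro c hc rfl
      rw [harg] at hc
      linarith [hsmall k, pi_pos]
    rw [← hfix _ (exp_ne_zero _) (hI I (by rw [arg_I, abs_of_pos (by positivity)]))
      (hI (-I) (by rw [arg_neg_I, abs_neg, abs_of_pos (by positivity)])), hpow]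
  simpa [σ] using hf.apply_eq_zero_of_injective hσ hstep

theorem apply_I_eq_zero {M : Type*} [Zero M] {f : ℂ → M}
    (hf : (Function.support f).Finite) {d : ℕ} (hd : 3 ≤ d)
    (hfix : ∀ b : ℂ, b ≠ 0 → b ≠ I → b ≠ -I → f (b ^ d) = f b) : f I = 0 := by
  simpa using apply_exp_mul_I_eq_zero hf hd hfix (θ := π / 2)
    ⟨by linarith [pi_pos], by linarith [pi_pos]⟩ (by positivity)

theorem apply_I_pow_eq_zero {M : Type*} [Zero M] {f : ℂ → M}
    (hf : (Function.support f).Finite) {d : ℕ} (hd : 3 ≤ d)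
    (hfix : ∀ b : ℂ, b ≠ 0 → b ≠ I → b ≠ -I → f (b ^ d) = f b) : f (I ^ d) = 0 := by
  have hpi := pi_pos
  have hnegI : f (-I) = 0 := by
    simpa using apply_exp_mul_I_eq_zero hf hd hfix (θ := -π / 2)
      ⟨by linarith, by linarith⟩ (by linarith)
  have hneg1 : f (-1) = 0 := by
    simpa using apply_exp_mul_I_eq_zero hf hd hfix (θ := π) ⟨by linarith, le_rfl⟩ hpi.ne'
  rw [I_pow_eq_pow_mod]
  have h4 : d % 4 < 4 := Nat.mod_lt _ (by norm_num)
  interval_cases hm : d % 4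
  · have hd2 : (-1 : ℂ) ^ d = 1 := Even.neg_one_pow ⟨d / 2, by omega⟩
    rw [pow_zero, ← hd2, hfix (-1) (by norm_num) (by simp [Complex.ext_iff])
      (by simp [Complex.ext_iff]), hneg1]
  · simpa using apply_I_eq_zero hf hd hfix
  · simpa using hneg1
  · simpa [I_pow_three] using hnegI

end Complex

open RatFunc Complex Real

/-- For `d ≥ 3` and integers `(n₁, n₂) ≠ (0, 0)`, no nonzero rational function
`r ∈ ℂ(z)` satisfies `r(z^d) = (1 − z)^(−n₁)·(1 + z²)^(−n₂)·r(z)`. Here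
`r(z^d)` is expressed as the evaluation of `r` at `X^d` in `ℂ(X)` (note that
the denominator of `r` never evaluates to `0` at `X^d`, so this evaluation is
the honest substitution). -/
theorem no_ratFunc_solution_homog_d
    (d : ℕ) (hd : 3 ≤ d) (n₁ n₂ : ℤ) (hn : (n₁, n₂) ≠ (0, 0)) :
    ¬ ∃ r : RatFunc ℂ, r ≠ 0 ∧
        RatFunc.eval RatFunc.C (RatFunc.X ^ d) r =
          (1 - RatFunc.X) ^ (-n₁) * (1 + RatFunc.X ^ 2) ^ (-n₂) * r := by
  rintro ⟨r, hr, heq⟩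
  have hI_ne_one : I ≠ 1 := by norm_num [Complex.ext_iff]
  have hI_ne_neg_I : I ≠ -I := by norm_num [Complex.ext_iff]
  have hone_ne_neg_I : (1 : ℂ) ≠ -I := by norm_num [Complex.ext_iff]
  have hu₁ : (1 - X : RatFunc ℂ) ≠ 0 := fun h => by simpa [h] using ordAt_one_sub_X (1 : ℂ)
  have hu₂ : (1 + X ^ 2 : RatFunc ℂ) ≠ 0 := fun h => by
    simpa [h, hI_ne_neg_I] using ordAt_one_add_X_sq I
  have hrel (a : ℂ) (ha : a ≠ 0) :
      ordAt (a ^ d) r = ordAt a r - n₁ * ordAt a (1 - X) - n₂ * ordAt a (1 + X ^ 2) := by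
    rw [← ordAt_eval_X_pow (Nat.cast_ne_zero.mpr (by omega)) r ha, heq,
      ordAt_mul (mul_ne_zero (zpow_ne_zero _ hu₁) (zpow_ne_zero _ hu₂)) hr,
      ordAt_mul (zpow_ne_zero _ hu₁) (zpow_ne_zero _ hu₂), ordAt_zpow hu₁, ordAt_zpow hu₂]
    ring
  have hn₁ : n₁ = 0 := by
    have h := hrel 1 one_ne_zero
    simp only [one_pow, ordAt_one_sub_X, ordAt_one_add_X_sq, if_pos, if_neg hI_ne_one.symm,
      if_neg hone_ne_neg_I] at h
    lia
  subst hn₁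
  have hfix (b : ℂ) (hb : b ≠ 0) (hbI : b ≠ I) (hbnI : b ≠ -I) : ordAt (b ^ d) r = ordAt b r := by
    simpa [ordAt_one_add_X_sq, hbI, hbnI] using hrel b hb
  have hsupp := finite_support_ordAt r
  have hId := hrel I I_ne_zero
  rw [apply_I_pow_eq_zero hsupp hd hfix, apply_I_eq_zero hsupp hd hfix, ordAt_one_add_X_sq] at hId
  simp [hI_ne_neg_I] at hId
  exact hn (by simp [hId])
end

section
/- For every complex z with |z| < 1, T_2(z) = 1/(1 − z) − 2·f_TMM(z), that is, Π_{n≥0}(1 − z^{2^n}) = 1/(1 − z) − 2·Σ_{n≥0} t_n z^n. -/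
/-!
Substituting `2 ^ N + k` for `k < 2 ^ N` flips the Thue–Morse bit, so multiplying
`∑_{k < 2^N} (-1)^{t_k} z^k` by `1 - z^(2^N)` gives the same sum up to `2^(N+1)`. Hence the
partial products of `T_2` are partial sums of `∑ (1 - 2 t_k) z^k = 1/(1 - z) - 2 f_TMM(z)`, and for
`|z| < 1` both sides converge.
-/

open Finset Filter

structure IsThueMorse {R : Type*} [AddGroupWithOne R] (t : ℕ → R) : Prop where
  zero : t 0 = 0
  two_mul : ∀ n, t (2 * n) = t n
  two_mul_add_one : ∀ n, t (2 * n + 1) = 1 - t n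

namespace IsThueMorse

section AddGroupWithOne

variable {R : Type*} [AddGroupWithOne R] {t : ℕ → R}

theorem eq_zero_or_eq_one (ht : IsThueMorse t) (n : ℕ) : t n = 0 ∨ t n = 1 := by
  induction n using Nat.strong_induction_on with
  | _ n ih =>
    obtain rfl | hn := Nat.eq_zero_or_pos n
    · exact Or.inl ht.zero
    obtain ⟨m, rfl | rfl⟩ := Nat.even_or_odd' n
    · rw [ht.two_mul]
      exact ih m (by omega)
    · rw [ht.two_mul_add_one]
      rcases ih m (by omega) with h | h <;> simp [h]

theorem two_pow_add (ht : IsThueMorse t) {N k : ℕ} (hk : k < 2 ^ N) :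
    t (2 ^ N + k) = 1 - t k := by
  induction N generalizing k with
  | zero =>
    obtain rfl : k = 0 := by omega
    simpa [ht.zero] using ht.two_mul_add_one 0
  | succ N ih =>
    rw [pow_succ] at hk ⊢
    obtain ⟨m, rfl | rfl⟩ := Nat.even_or_odd' k
    · rw [show 2 ^ N * 2 + 2 * m = 2 * (2 ^ N + m) by ring, ht.two_mul, ht.two_mul,
        ih (by omega)]
    · rw [show 2 ^ N * 2 + (2 * m + 1) = 2 * (2 ^ N + m) + 1 by ring, ht.two_mul_add_one,
        ht.two_mul_add_one, ih (by omega)]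

end AddGroupWithOne

theorem prod_range_one_sub_pow_two_pow {R : Type*} [CommRing R] {t : ℕ → R}
    (ht : IsThueMorse t) (z : R) (N : ℕ) :
    ∏ n ∈ range N, (1 - z ^ 2 ^ n) = ∑ k ∈ range (2 ^ N), (1 - 2 * t k) * z ^ k := by
  induction N with
  | zero => simp [ht.zero]
  | succ N ih =>
    have upper_half : ∑ k ∈ range (2 ^ N), (1 - 2 * t (2 ^ N + k)) * z ^ (2 ^ N + k) =
        -z ^ 2 ^ N * ∑ k ∈ range (2 ^ N), (1 - 2 * t k) * z ^ k := by
      rw [mul_sum]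
      refine sum_congr rfl fun k hk => ?_
      rw [ht.two_pow_add (mem_range.mp hk), pow_add]
      ring
    rw [prod_range_succ, ih, pow_succ, mul_two, sum_range_add, upper_half]
    ring

section NormedField

variable {𝕜 : Type*} [NormedField 𝕜] [CompleteSpace 𝕜] {t : ℕ → 𝕜} {z : 𝕜}

theorem summable_mul_pow (ht : IsThueMorse t) (hz : ‖z‖ < 1) :
    Summable fun k => t k * z ^ k := by
  refine .of_norm_bounded (summable_geometric_of_lt_one (norm_nonneg z) hz) fun k => ?_
  rw [norm_mul, norm_pow]
  refine mul_le_of_le_one_left (by positivity) ?_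
  rcases ht.eq_zero_or_eq_one k with h | h <;> simp [h]

theorem hasSum_one_sub_two_mul_mul_pow (ht : IsThueMorse t) (hz : ‖z‖ < 1) :
    HasSum (fun k => (1 - 2 * t k) * z ^ k) ((1 - z)⁻¹ - 2 * ∑' k, t k * z ^ k) := by
  simpa only [sub_mul, one_mul, mul_assoc] using (hasSum_geometric_of_norm_lt_one hz).sub
    ((ht.summable_mul_pow hz).hasSum.mul_left 2)

end NormedField

end IsThueMorse

theorem multipliable_one_sub_pow_two_pow {R : Type*} [NormedCommRing R] [NormOneClass R]
    [CompleteSpace R] {z : R} (hz : ‖z‖ < 1) : Multipliable fun n => 1 - z ^ 2 ^ n := by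
  simp_rw [sub_eq_add_neg]
  refine multipliable_one_add_of_summable <|
    .of_nonneg_of_le (fun _ => norm_nonneg _) (fun n => ?_)
      (summable_geometric_of_lt_one (norm_nonneg z) hz)
  rw [norm_neg]
  exact (norm_pow_le' z (Nat.two_pow_pos n)).trans
    (pow_le_pow_of_le_one (norm_nonneg z) hz.le Nat.lt_two_pow_self.le)

/-- For every complex `z` with `|z| < 1`,
`Π_{n≥0}(1 − z^(2^n)) = 1/(1 − z) − 2·Σ_{n≥0} t_n z^n`, where `(t_n)` is the
Thue–Morse sequence given by its defining recurrences. -/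
theorem T2_eq_one_div_sub_two_fTMM
    (t : ℕ → ℂ)
    (ht0 : t 0 = 0) (ht2 : ∀ n, t (2 * n) = t n) (ht21 : ∀ n, t (2 * n + 1) = 1 - t n)
    (z : ℂ) (hz : ‖z‖ < 1) :
    ∏' n : ℕ, (1 - z ^ (2 ^ n)) = 1 / (1 - z) - 2 * ∑' n : ℕ, t n * z ^ n := by
  have ht : IsThueMorse t := ⟨ht0, ht2, ht21⟩
  have partial_prods := (multipliable_one_sub_pow_two_pow hz).hasProd.tendsto_prod_nat
  simp_rw [ht.prod_range_one_sub_pow_two_pow] at partial_prods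
  have partial_sums := (ht.hasSum_one_sub_two_mul_mul_pow hz).tendsto_sum_nat.comp
    (tendsto_pow_atTop_atTop_of_one_lt one_lt_two)
  rw [one_div]
  exact tendsto_nhds_unique partial_prods partial_sums
end

section
/- For every complex z with |z| < 1, G_{2,2}(z) = z·f_RPF(z), that is, Σ_{n≥0} z^{2^n}/(1 − z^{2^{n+2}}) = z·Σ_{n≥0} u_n z^n. -/
/-!
Expanding each term as a geometric series turns the left side into the sum of
`z ^ (2 ^ a * (4 * k + 1))` over all pairs `(a, k)`. These exponents are pairwise distinct (compare
2-adic valuations), and the recurrences force `u m = 1` when `m + 1` has the form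
`2 ^ a * (4 * k + 1)` and `u m = 0` otherwise, so the double sum is `∑ u m * z ^ (m + 1)`.
-/

theorem padicValNat_two_pow_mul_odd (a : ℕ) {m : ℕ} (hm : Odd m) :
    padicValNat 2 (2 ^ a * m) = a := by
  rw [padicValNat.mul (by positivity) hm.pos.ne', padicValNat.prime_pow,
    padicValNat.eq_zero_of_not_dvd hm.not_two_dvd_nat, add_zero]

theorem two_pow_mul_four_mul_add_one_injective :
    Function.Injective fun p : ℕ × ℕ => 2 ^ p.1 * (4 * p.2 + 1) := by
  rintro ⟨a, k⟩ ⟨b, l⟩ h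
  have hodd (k : ℕ) : Odd (4 * k + 1) := ⟨2 * k, by ring⟩
  have hab : a = b := by
    simpa only [padicValNat_two_pow_mul_odd _ (hodd _)] using congrArg (padicValNat 2) h
  subst hab
  have hkl : 4 * k + 1 = 4 * l + 1 := Nat.eq_of_mul_eq_mul_left (by positivity) h
  simp only [Prod.mk.injEq, true_and]
  omega

theorem tsum_pow_add_mul {K : Type*} [NormedDivisionRing K] {z : K} (hz : ‖z‖ < 1) (a : ℕ)
    {b : ℕ} (hb : b ≠ 0) : ∑' k : ℕ, z ^ (a + b * k) = z ^ a * (1 - z ^ b)⁻¹ := by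
  have hzb : ‖z ^ b‖ < 1 := by
    rw [norm_pow]
    exact pow_lt_one₀ (norm_nonneg z) hz hb
  simp_rw [pow_add, pow_mul, tsum_mul_left, tsum_geometric_of_norm_lt_one hzb]

section Paperfolding

variable {α : Type*} {u : ℕ → α}

theorem paperfolding_eq_one [One α] (hu4 : ∀ n, u (4 * n) = 1)
    (hu21 : ∀ n, u (2 * n + 1) = u n) {m a k : ℕ} (h : m + 1 = 2 ^ a * (4 * k + 1)) :
    u m = 1 := by
  induction a generalizing m with
  | zero => simpa [show m = 4 * k by omega] using hu4 k
  | succ a ih =>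
    set N := 2 ^ a * (4 * k + 1)
    have hN : m + 1 = 2 * N := by rw [h, pow_succ']; ring
    obtain ⟨t, rfl⟩ : ∃ t, m = 2 * t + 1 := ⟨m / 2, by omega⟩
    rw [hu21]
    exact ih (by omega)

theorem paperfolding_eq_zero [Zero α] (hu42 : ∀ n, u (4 * n + 2) = 0)
    (hu21 : ∀ n, u (2 * n + 1) = u n) {m : ℕ} (h : ∀ a k, m + 1 ≠ 2 ^ a * (4 * k + 1)) :
    u m = 0 := by
  induction m using Nat.strong_induction_on with
  | _ m ih =>
    obtain ⟨t, rfl | rfl⟩ := Nat.even_or_odd' m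
    · obtain ⟨s, rfl | rfl⟩ := Nat.even_or_odd' t
      · exact absurd (by ring) (h 0 s)
      · rw [show 2 * (2 * s + 1) = 4 * s + 2 by ring]
        exact hu42 s
    · rw [hu21]
      refine ih t (by omega) fun a k ht => h (a + 1) k ?_
      rw [pow_succ', mul_assoc, ← ht]
      ring

end Paperfolding

theorem tsum_two_pow_mul_four_mul_add_one_eq_tsum_paperfolding {R : Type*} [Semiring R]
    [TopologicalSpace R] {u : ℕ → R} (hu4 : ∀ n, u (4 * n) = 1)
    (hu42 : ∀ n, u (4 * n + 2) = 0) (hu21 : ∀ n, u (2 * n + 1) = u n) (f : ℕ → R) :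
    ∑' p : ℕ × ℕ, f (2 ^ p.1 * (4 * p.2 + 1)) = ∑' m, u m * f (m + 1) := by
  set e : ℕ × ℕ → ℕ := fun p => 2 ^ p.1 * (4 * p.2 + 1) - 1
  have he (p : ℕ × ℕ) : e p + 1 = 2 ^ p.1 * (4 * p.2 + 1) :=
    Nat.sub_add_cancel (Nat.one_le_iff_ne_zero.2 (by positivity))
  have he_inj : Function.Injective e := fun p q hpq =>
    two_pow_mul_four_mul_add_one_injective <| by simp only [← he, hpq]
  have hsupp : (Function.support fun m => u m * f (m + 1)) ⊆ Set.range e := by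
    intro m hm
    by_contra hme
    have hum : u m = 0 := paperfolding_eq_zero hu42 hu21 fun a k hak =>
      hme ⟨(a, k), by simp only [e, ← hak, Nat.add_sub_cancel]⟩
    exact hm (by simp only [hum, zero_mul])
  rw [← he_inj.tsum_eq hsupp]
  refine tsum_congr fun p => ?_
  rw [paperfolding_eq_one hu4 hu21 (he p), one_mul, he]

/-- For every complex `z` with `|z| < 1`,
`Σ_{n≥0} z^(2^n)/(1 − z^(2^(n+2))) = z·Σ_{n≥0} u_n z^n`, where `(u_n)` is the
regular paperfolding sequence given by its defining recurrences. -/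
theorem G22_eq_z_mul_fRPF
    (u : ℕ → ℂ)
    (hu4 : ∀ n, u (4 * n) = 1) (hu42 : ∀ n, u (4 * n + 2) = 0)
    (hu21 : ∀ n, u (2 * n + 1) = u n)
    (z : ℂ) (hz : ‖z‖ < 1) :
    ∑' n : ℕ, z ^ (2 ^ n) / (1 - z ^ (2 ^ (n + 2))) = z * ∑' n : ℕ, u n * z ^ n := by
  have hsum : Summable fun p : ℕ × ℕ => z ^ (2 ^ p.1 * (4 * p.2 + 1)) :=
    (summable_geometric_of_norm_lt_one hz).comp_injective two_pow_mul_four_mul_add_one_injective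
  calc ∑' n : ℕ, z ^ (2 ^ n) / (1 - z ^ (2 ^ (n + 2)))
      = ∑' n : ℕ, ∑' k : ℕ, z ^ (2 ^ n * (4 * k + 1)) := tsum_congr fun n => by
        rw [div_eq_mul_inv, ← tsum_pow_add_mul hz _ (by positivity)]
        ring_nf
    _ = ∑' p : ℕ × ℕ, z ^ (2 ^ p.1 * (4 * p.2 + 1)) :=
        (hsum.tsum_prod' hsum.prod_factor).symm
    _ = ∑' m : ℕ, u m * z ^ (m + 1) :=
        tsum_two_pow_mul_four_mul_add_one_eq_tsum_paperfolding hu4 hu42 hu21 (z ^ ·)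
    _ = z * ∑' n : ℕ, u n * z ^ n := by
        simp_rw [pow_succ', mul_left_comm _ z, tsum_mul_left]
end
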